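/- arXiv:1210.1788 — 2 statements merged into one kernel-verified Lean document; each statement's English description precedes it below -/
import Mathlib

section
/- Let Ω ⊂ ℝⁿ be a bounded domain with C¹ boundary and let u ∈ C²(Ω̄) satisfy the Neumann condition ∂u/∂ν = 1 on ∂Ω, where ν is the outward unit normal. Let Γ_u ⊂ Ω be the lower contact set of u, i.e., the set of points x ∈ Ω such that u(y) ≥ u(x) + ∇u(x)·(y − x) for all y ∈ Ω̄. Then the open Euclidean unit ball B₁ of ℝⁿ centered at the origin is contained in ∇u(Γ_u), the image of Γ_u under the gradient map of u. -/
/-!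
For `‖p‖ < 1`, minimize `y ↦ u y - ⟪p, y⟫` over the compact set `Ω̄`. At a boundary point the
derivative of this function in the inward direction `-ν` is `⟪p, ν⟫ - ∂u/∂ν = ⟪p, ν⟫ - 1 < 0`, so
the minimum is attained at an interior point `x`. There `∇u x = p` by Fermat's rule, and minimality
of `u - ⟪p, ·⟫` at `x` says exactly that the tangent plane of `u` at `x` lies below `u` on `Ω̄`.
-/

open MeasureTheory Metric Set
open scoped RealInnerProductSpace NNReal ENNReal

noncomputable section

/-- A bounded domain of class `C¹` in `ℝⁿ`: a bounded, connected, open set whose boundary is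
locally the graph of a `C¹` function (the set lying locally on one side of the graph). -/
def IsC1Domain {n : ℕ} (Ω : Set (EuclideanSpace ℝ (Fin n))) : Prop :=
  IsOpen Ω ∧ IsConnected Ω ∧ Bornology.IsBounded Ω ∧
  ∀ x ∈ frontier Ω, ∃ r > (0:ℝ), ∃ v : EuclideanSpace ℝ (Fin n), ‖v‖ = 1 ∧
    ∃ φ : EuclideanSpace ℝ (Fin n) → ℝ, ContDiff ℝ 1 φ ∧
      ∀ y ∈ ball x r, (y ∈ Ω ↔ φ (y - ⟪y, v⟫ • v) < ⟪y, v⟫)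

/-- `ν` is the outward unit normal vector field on the boundary of `Ω`. -/
def IsOutwardUnitNormal {n : ℕ} (Ω : Set (EuclideanSpace ℝ (Fin n)))
    (ν : EuclideanSpace ℝ (Fin n) → EuclideanSpace ℝ (Fin n)) : Prop :=
  ∀ x ∈ frontier Ω, ‖ν x‖ = 1 ∧
    (∀ᶠ t : ℝ in nhdsWithin 0 (Ioi 0), x + t • ν x ∉ closure Ω) ∧
    (∀ᶠ t : ℝ in nhdsWithin 0 (Ioi 0), x - t • ν x ∈ Ω)

open Filter Topology InnerProductSpace
open scoped Gradient

section

variable {E : Type*} [NormedAddCommGroup E] [InnerProductSpace ℝ E]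

theorem add_inner_sub_le_of_isMinOn_sub_inner {u : E → ℝ} {s : Set E} {p x y : E}
    (h : IsMinOn (fun z ↦ u z - ⟪p, z⟫) s x) (hy : y ∈ s) : u x + ⟪p, y - x⟫ ≤ u y := by
  have := isMinOn_iff.1 h y hy
  rw [inner_sub_right]
  linarith

variable [CompleteSpace E]

def lowerContactSet (u : E → ℝ) (Ω : Set E) : Set E :=
  {x ∈ Ω | ∀ y ∈ closure Ω, u x + ⟪∇ u x, y - x⟫ ≤ u y}

theorem IsLocalMin.hasGradientAt_eq_zero {f : E → ℝ} {g x : E} (h : IsLocalMin f x)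
    (hf : HasGradientAt f g x) : g = 0 :=
  (toDual ℝ E).map_eq_zero_iff.1 (h.hasFDerivAt_eq_zero hf.hasFDerivAt)

theorem IsMinOn.inner_gradient_nonneg_of_eventually_add_smul_mem {f : E → ℝ} {s : Set E}
    {g x w : E} (h : IsMinOn f s x) (hf : HasGradientAt f g x)
    (hw : ∀ᶠ t in 𝓝[>] (0 : ℝ), x + t • w ∈ s) : 0 ≤ ⟪g, w⟫ := by
  simpa using h.localize.hasFDerivWithinAt_nonneg hf.hasFDerivAt.hasFDerivWithinAt
    (mem_posTangentConeAt_of_frequently_mem hw.frequently)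

theorem hasGradientAt_sub_inner {u : E → ℝ} {x : E} (hu : DifferentiableAt ℝ u x) (p : E) :
    HasGradientAt (fun y ↦ u y - ⟪p, y⟫) (∇ u x - p) x := by
  rw [hasGradientAt_iff_hasFDerivAt, map_sub]
  exact hu.hasGradientAt.hasFDerivAt.sub (toDual ℝ E p).hasFDerivAt

theorem not_isMinOn_sub_inner_of_inward {u : E → ℝ} {s : Set E} {p x ν : E}
    (hu : DifferentiableAt ℝ u x) (hp : ‖p‖ < 1) (hν : ‖ν‖ ≤ 1) (hN : ⟪∇ u x, ν⟫ = 1)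
    (hin : ∀ᶠ t in 𝓝[>] (0 : ℝ), x - t • ν ∈ s) :
    ¬IsMinOn (fun y ↦ u y - ⟪p, y⟫) s x := by
  intro h
  have hslope : 0 ≤ ⟪∇ u x - p, -ν⟫ :=
    h.inner_gradient_nonneg_of_eventually_add_smul_mem (hasGradientAt_sub_inner hu p)
      (by simpa only [smul_neg, ← sub_eq_add_neg] using hin)
  have hpν : ⟪p, ν⟫ < 1 :=
    (real_inner_le_norm p ν).trans_lt (mul_lt_one_of_nonneg_of_lt_one_left (norm_nonneg p) hp hν)
  rw [inner_neg_right, inner_sub_left, hN] at hslope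
  linarith

theorem ball_subset_gradient_image_lowerContactSet [ProperSpace E] {Ω : Set E} {u : E → ℝ}
    {ν : E → E} (hΩo : IsOpen Ω) (hΩb : Bornology.IsBounded Ω) (hΩne : Ω.Nonempty)
    (hu : ∀ x ∈ closure Ω, DifferentiableAt ℝ u x) (hν : ∀ x ∈ frontier Ω, ‖ν x‖ ≤ 1)
    (hin : ∀ x ∈ frontier Ω, ∀ᶠ t in 𝓝[>] (0 : ℝ), x - t • ν x ∈ Ω)
    (hN : ∀ x ∈ frontier Ω, ⟪∇ u x, ν x⟫ = 1) :
    ball (0 : E) 1 ⊆ ∇ u '' lowerContactSet u Ω := by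
  intro p hp
  rw [mem_ball_zero_iff] at hp
  have hcont : ContinuousOn (fun y ↦ u y - ⟪p, y⟫) (closure Ω) := fun x hx ↦
    ((hu x hx).continuousAt.sub (continuous_const.inner continuous_id).continuousAt)
      |>.continuousWithinAt
  obtain ⟨x, hx, hmin⟩ := hΩb.isCompact_closure.exists_isMinOn hΩne.closure hcont
  have hxΩ : x ∈ Ω := by
    by_contra hxΩ
    have hfr : x ∈ frontier Ω := ⟨hx, by rwa [hΩo.interior_eq]⟩
    exact not_isMinOn_sub_inner_of_inward (hu x hx) hp (hν x hfr) (hN x hfr)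
      ((hin x hfr).mono fun _ ↦ (subset_closure ·)) hmin
  have hgrad : ∇ u x = p := sub_eq_zero.1 <|
    (hmin.isLocalMin (mem_of_superset (hΩo.mem_nhds hxΩ) subset_closure)).hasGradientAt_eq_zero
      (hasGradientAt_sub_inner (hu x hx) p)
  exact ⟨x, ⟨hxΩ, fun y hy ↦ hgrad ▸ add_inner_sub_le_of_isMinOn_sub_inner hmin hy⟩, hgrad⟩

end

theorem unit_ball_subset_gradient_image_of_lower_contact_set_general
    (n : ℕ)
    (Ω : Set (EuclideanSpace ℝ (Fin n))) (hΩ : IsC1Domain Ω)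
    (u : EuclideanSpace ℝ (Fin n) → ℝ)
    (U : Set (EuclideanSpace ℝ (Fin n))) (hUopen : IsOpen U) (hΩU : closure Ω ⊆ U)
    (hu : ContDiffOn ℝ 2 u U)
    (ν : EuclideanSpace ℝ (Fin n) → EuclideanSpace ℝ (Fin n))
    (hν : IsOutwardUnitNormal Ω ν)
    (hNeumann : ∀ x ∈ frontier Ω, ⟪gradient u x, ν x⟫ = 1) :
    ball (0 : EuclideanSpace ℝ (Fin n)) 1 ⊆
      gradient u '' {x ∈ Ω | ∀ y ∈ closure Ω, u x + ⟪gradient u x, y - x⟫ ≤ u y} := by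
  obtain ⟨hΩo, hΩc, hΩb, -⟩ := hΩ
  exact ball_subset_gradient_image_lowerContactSet hΩo hΩb hΩc.nonempty
    (fun x hx ↦ (hu.contDiffAt (hUopen.mem_nhds (hΩU hx))).differentiableAt two_ne_zero)
    (fun x hx ↦ (hν x hx).1.le) (fun x hx ↦ (hν x hx).2.2) hNeumann

/-- If `u ∈ C²(Ω̄)` on a bounded `C¹` domain `Ω` satisfies the Neumann condition
`∂u/∂ν = 1` on `∂Ω`, then the unit ball `B₁` is contained in the image of the lower
contact set `Γ_u` of `u` under the gradient map `∇u`. -/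
theorem unit_ball_subset_gradient_image_of_lower_contact_set
    (n : ℕ) (hn : 1 ≤ n)
    (Ω : Set (EuclideanSpace ℝ (Fin n))) (hΩ : IsC1Domain Ω)
    (u : EuclideanSpace ℝ (Fin n) → ℝ)
    (U : Set (EuclideanSpace ℝ (Fin n))) (hUopen : IsOpen U) (hΩU : closure Ω ⊆ U)
    (hu : ContDiffOn ℝ 2 u U)
    (ν : EuclideanSpace ℝ (Fin n) → EuclideanSpace ℝ (Fin n))
    (hν : IsOutwardUnitNormal Ω ν)
    (hNeumann : ∀ x ∈ frontier Ω, ⟪gradient u x, ν x⟫ = 1) :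
    ball (0 : EuclideanSpace ℝ (Fin n)) 1 ⊆
      gradient u '' {x ∈ Ω | ∀ y ∈ closure Ω, u x + ⟪gradient u x, y - x⟫ ≤ u y} :=
  unit_ball_subset_gradient_image_of_lower_contact_set_general n Ω hΩ u U hUopen hΩU hu ν hν
    hNeumann

end
end

section
/- Let Σ be an open convex cone in ℝⁿ, α > 0, D = n + α, and let w : Σ → ℝ be positive, C¹ in Σ, homogeneous of degree α, with w^{1/α} concave on Σ. Let b > 0 be a constant. Suppose x ∈ Σ, p ∈ Σ, and L ≥ 0 are such that ∇w(x) · p + w(x) L = b w(x) (the elliptic equation w^{-1} div(w ∇u) = b evaluated at a point with gradient p and Laplacian L). Then w(p) (L/n)^n ≤ w(x) (b/D)^D. -/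
/-! Since `g = w ^ (1 / α)` is concave, it lies below its tangent plane at `x`, and Euler's
identity `∇w(x) · x = α w(x)` makes that plane pass through the origin:
`g(p) ≤ g(x) ∇w(x) · p / (α w(x)) = g(x) (b - L) / α`. Raising this to the power `α` gives
`w(p) ≤ ((b - L) / α) ^ α w(x)`, and the weighted AM-GM inequality with weights `α / D` and
`n / D` bounds `((b - L) / α) ^ α (L / n) ^ n` by `(b / D) ^ D`. -/

open scoped RealInnerProductSpace

section

variable {E : Type*} [NormedAddCommGroup E] [NormedSpace ℝ E]

theorem ConcaveOn.le_add_of_hasFDerivAt {S : Set E} {f : E → ℝ} {f' : E →L[ℝ] ℝ} {x y : E}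
    (hf : ConcaveOn ℝ S f) (hx : x ∈ S) (hy : y ∈ S) (hf' : HasFDerivAt f f' x) :
    f y ≤ f x + f' (y - x) := by
  set ℓ := AffineMap.lineMap (k := ℝ) x y
  have hline : HasDerivAt (fun t : ℝ => f (ℓ t)) (f' (y - x)) 0 := by
    have hℓ : HasDerivAt ℓ (y - x) 0 := AffineMap.hasDerivAt_lineMap
    exact (by simpa [ℓ] using hf' : HasFDerivAt f f' (ℓ 0)).comp_hasDerivAt 0 hℓ
  have hslope := (hf.comp_affineMap ℓ).slope_le_of_hasDerivAt
    (by simpa [ℓ] using hx) (by simpa [ℓ] using hy) zero_lt_one hline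
  simp only [slope_def_field, Function.comp_apply, ℓ, AffineMap.lineMap_apply_zero,
    AffineMap.lineMap_apply_one, sub_zero, div_one] at hslope
  linarith

theorem HasFDerivAt.apply_self_eq_of_homogeneous {w : E → ℝ} {w' : E →L[ℝ] ℝ} {x : E} {α : ℝ}
    (hw : HasFDerivAt w w' x) (hhom : ∀ t : ℝ, 0 < t → w (t • x) = t ^ α * w x) :
    w' x = α * w x := by
  have hray : HasDerivAt (fun t : ℝ => w (t • x)) (w' x) 1 := by
    have hsmul : HasDerivAt (fun t : ℝ => t • x) x 1 := by
      simpa using (hasDerivAt_id (1 : ℝ)).smul_const x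
    exact (by rwa [one_smul] : HasFDerivAt w w' ((1 : ℝ) • x)).comp_hasDerivAt 1 hsmul
  have hpow : HasDerivAt (fun t : ℝ => w (t • x)) (α * w x) 1 := by
    have hrpow : HasDerivAt (fun t : ℝ => t ^ α * w x) (α * w x) 1 := by
      simpa using (Real.hasDerivAt_rpow_const (x := 1) (p := α) (Or.inl one_ne_zero)).mul_const (w x)
    refine hrpow.congr_of_eventuallyEq ?_
    filter_upwards [Ioi_mem_nhds one_pos] with t ht using hhom t ht
  exact hray.unique hpow

theorem rpow_inv_le_of_concaveOn_rpow_inv {S : Set E} {w : E → ℝ} {w' : E →L[ℝ] ℝ} {x p : E}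
    {α : ℝ} (hα : 0 < α) (hconc : ConcaveOn ℝ S (fun x => w x ^ (1 / α))) (hx : x ∈ S)
    (hp : p ∈ S) (hwx : 0 < w x) (hw : HasFDerivAt w w' x)
    (hhom : ∀ t : ℝ, 0 < t → w (t • x) = t ^ α * w x) :
    w p ^ (1 / α) ≤ w' p / (α * w x) * w x ^ (1 / α) := by
  have htangent := hconc.le_add_of_hasFDerivAt hx hp (hw.rpow_const (p := 1 / α) (Or.inl hwx.ne'))
  have hcoeff : 1 / α * w x ^ (1 / α - 1) = w x ^ (1 / α) / (α * w x) := by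
    rw [Real.rpow_sub hwx, Real.rpow_one]
    field_simp
  rw [smul_apply, map_sub, hw.apply_self_eq_of_homogeneous hhom, hcoeff,
    smul_eq_mul] at htangent
  calc w p ^ (1 / α) ≤ w x ^ (1 / α) + w x ^ (1 / α) / (α * w x) * (w' p - α * w x) := htangent
    _ = w' p / (α * w x) * w x ^ (1 / α) := by field_simp; ring

end

theorem Real.le_rpow_mul_of_rpow_inv_le {u v r α : ℝ} (hα : 0 < α) (hu : 0 ≤ u) (hv : 0 ≤ v)
    (hr : 0 ≤ r) (h : u ^ (1 / α) ≤ r * v ^ (1 / α)) : u ≤ r ^ α * v := by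
  have hinv : 1 / α * α = 1 := one_div_mul_cancel hα.ne'
  calc u = (u ^ (1 / α)) ^ α := by rw [← Real.rpow_mul hu, hinv, Real.rpow_one]
    _ ≤ (r * v ^ (1 / α)) ^ α := Real.rpow_le_rpow (Real.rpow_nonneg hu _) h hα.le
    _ = r ^ α * v := by
      rw [Real.mul_rpow hr (Real.rpow_nonneg hv _), ← Real.rpow_mul hv, hinv, Real.rpow_one]

theorem Real.sub_div_rpow_mul_div_rpow_le {m α b L : ℝ} (hm : 0 ≤ m) (hα : 0 < α) (hL : 0 ≤ L)
    (hLb : L ≤ b) :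
    ((b - L) / α) ^ α * (L / m) ^ m ≤ (b / (m + α)) ^ (m + α) := by
  set D := m + α
  have hD : 0 < D := by positivity
  have hX : 0 ≤ (b - L) / α := div_nonneg (sub_nonneg.2 hLb) hα.le
  have hY : 0 ≤ L / m := div_nonneg hL hm
  have hmL : m * (L / m) ≤ L := by
    rcases hm.eq_or_lt with rfl | hm
    · simpa using hL
    · rw [mul_div_cancel₀ _ hm.ne']
  have hmean : ((b - L) / α) ^ (α / D) * (L / m) ^ (m / D) ≤ b / D :=
    calc ((b - L) / α) ^ (α / D) * (L / m) ^ (m / D)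
        ≤ α / D * ((b - L) / α) + m / D * (L / m) :=
          Real.geom_mean_le_arith_mean2_weighted (by positivity) (by positivity) hX hY
            (by rw [← add_div, add_comm, div_self hD.ne'])
      _ = (b - L + m * (L / m)) / D := by field_simp
      _ ≤ b / D := by gcongr; linarith
  calc ((b - L) / α) ^ α * (L / m) ^ m
      = (((b - L) / α) ^ (α / D) * (L / m) ^ (m / D)) ^ D := by
        rw [Real.mul_rpow (by positivity) (by positivity), ← Real.rpow_mul hX, ← Real.rpow_mul hY,
          div_mul_cancel₀ _ hD.ne', div_mul_cancel₀ _ hD.ne']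
    _ ≤ (b / D) ^ D := Real.rpow_le_rpow (by positivity) hmean hD.le

theorem pointwise_key_inequality_general
    (n : ℕ)
    (S : Set (EuclideanSpace ℝ (Fin n)))
    (hSopen : IsOpen S)
    (α : ℝ) (hα : 0 < α)
    (w : EuclideanSpace ℝ (Fin n) → ℝ)
    (hwpos : ∀ x ∈ S, 0 < w x)
    (hwC1 : ContDiffOn ℝ 1 w S)
    (hhom : ∀ x ∈ S, ∀ t : ℝ, 0 < t → w (t • x) = t ^ α * w x)
    (hconc : ConcaveOn ℝ S (fun x => w x ^ (1 / α)))
    (b : ℝ)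
    (x : EuclideanSpace ℝ (Fin n)) (hx : x ∈ S)
    (p : EuclideanSpace ℝ (Fin n)) (hp : p ∈ S)
    (L : ℝ) (hL : 0 ≤ L)
    (heq : ⟪gradient w x, p⟫ + w x * L = b * w x) :
    w p * (L / n) ^ (n : ℝ) ≤ w x * (b / ((n : ℝ) + α)) ^ ((n : ℝ) + α) := by
  have hwx : 0 < w x := hwpos x hx
  have hw : HasFDerivAt w (InnerProductSpace.toDual ℝ _ (gradient w x)) x :=
    ((hwC1.differentiableOn one_ne_zero).differentiableAt (hSopen.mem_nhds hx)).hasGradientAt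
  have hratio : ⟪gradient w x, p⟫ / (α * w x) = (b - L) / α := by
    field_simp
    linarith
  have htangent := rpow_inv_le_of_concaveOn_rpow_inv hα hconc hx hp hwx hw (hhom x hx)
  rw [InnerProductSpace.toDual_apply_apply, hratio] at htangent
  have hbL : 0 ≤ (b - L) / α :=
    nonneg_of_mul_nonneg_left ((Real.rpow_nonneg (hwpos p hp).le _).trans htangent)
      (Real.rpow_pos_of_pos hwx _)
  calc w p * (L / n) ^ (n : ℝ) ≤ ((b - L) / α) ^ α * w x * (L / n) ^ (n : ℝ) := by
        gcongr
        exact Real.le_rpow_mul_of_rpow_inv_le hα (hwpos p hp).le hwx.le hbL htangent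
    _ = w x * (((b - L) / α) ^ α * (L / n) ^ (n : ℝ)) := by ring
    _ ≤ w x * (b / ((n : ℝ) + α)) ^ ((n : ℝ) + α) := by
        gcongr
        refine Real.sub_div_rpow_mul_div_rpow_le n.cast_nonneg hα hL ?_
        linarith [(le_div_iff₀ hα).mp hbL]

/-- Pointwise key inequality: if `S` is an open convex cone, `w` is positive, `C¹`,
homogeneous of degree `α > 0` with `w^{1/α}` concave on `S`, `b > 0`, and `x, p ∈ S`,
`L ≥ 0` satisfy `∇w(x)·p + w(x) L = b w(x)`, then with `D = n + α` one has
`w(p) (L/n)^n ≤ w(x) (b/D)^D`. -/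
theorem pointwise_key_inequality
    (n : ℕ) (hn : 1 ≤ n)
    (S : Set (EuclideanSpace ℝ (Fin n)))
    (hSopen : IsOpen S) (hSconv : Convex ℝ S)
    (hScone : ∀ x ∈ S, ∀ t : ℝ, 0 < t → t • x ∈ S)
    (α : ℝ) (hα : 0 < α)
    (w : EuclideanSpace ℝ (Fin n) → ℝ)
    (hwpos : ∀ x ∈ S, 0 < w x)
    (hwC1 : ContDiffOn ℝ 1 w S)
    (hhom : ∀ x ∈ S, ∀ t : ℝ, 0 < t → w (t • x) = t ^ α * w x)
    (hconc : ConcaveOn ℝ S (fun x => w x ^ (1 / α)))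
    (b : ℝ) (hb : 0 < b)
    (x : EuclideanSpace ℝ (Fin n)) (hx : x ∈ S)
    (p : EuclideanSpace ℝ (Fin n)) (hp : p ∈ S)
    (L : ℝ) (hL : 0 ≤ L)
    (heq : ⟪gradient w x, p⟫ + w x * L = b * w x) :
    w p * (L / n) ^ (n : ℝ) ≤ w x * (b / ((n : ℝ) + α)) ^ ((n : ℝ) + α) :=
  pointwise_key_inequality_general n S hSopen α hα w hwpos hwC1 hhom hconc b x hx p hp L hL heq
end
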